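/- arXiv:1106.4104 — 2 statements merged into one kernel-verified Lean document; each statement's English description precedes it below -/
import Mathlib

section
/- With ε, δ and the bracket [·,·] as fixed, the map (x, y) ↦ [x, y] is continuous on the set {(x, y) ∈ M × M : dist(x, y) < δ}. -/
open Set Filter Metric Topology

variable {M : Type*} [MetricSpace M] [CompactSpace M]

/-- `f` is expansive with expansivity constant `ρ`: if two orbits stay `ρ`-close for all
integer times, the points coincide. -/
def IsExpansiveWith (f : Equiv.Perm M) (ρ : ℝ) : Prop :=
  ∀ x y : M, (∀ n : ℤ, dist ((f ^ n) x) ((f ^ n) y) ≤ ρ) → x = y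

/-- The stable set `W^s(x)`. -/
def stableSet (f : Equiv.Perm M) (x : M) : Set M :=
  {y : M | Tendsto (fun n : ℤ => dist ((f ^ n) x) ((f ^ n) y)) atTop (𝓝 0)}

/-- The unstable set `W^u(x)`. -/
def unstableSet (f : Equiv.Perm M) (x : M) : Set M :=
  {y : M | Tendsto (fun n : ℤ => dist ((f ^ n) x) ((f ^ n) y)) atBot (𝓝 0)}

/-- The `ε`-stable set `W^s_ε(x)`. -/
def epsStable (f : Equiv.Perm M) (ε : ℝ) (x : M) : Set M :=
  {y : M | ∀ n : ℤ, 0 ≤ n → dist ((f ^ n) x) ((f ^ n) y) ≤ ε}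

/-- The `ε`-unstable set `W^u_ε(x)`. -/
def epsUnstable (f : Equiv.Perm M) (ε : ℝ) (x : M) : Set M :=
  {y : M | ∀ n : ℤ, n ≤ 0 → dist ((f ^ n) x) ((f ^ n) y) ≤ ε}

/-- Shadowing property: every `δ`-pseudo-orbit is `ε`-shadowed by a true orbit. -/
def HasShadowing (f : Equiv.Perm M) : Prop :=
  ∀ ε : ℝ, 0 < ε → ∃ δ : ℝ, 0 < δ ∧ ∀ y : ℤ → M,
    (∀ n : ℤ, dist (f (y n)) (y (n + 1)) < δ) →
      ∃ z : M, ∀ n : ℤ, dist ((f ^ n) z) (y n) ≤ ε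

/-- A rectangle: a nonempty set of diameter `< δ` closed under the bracket operation. -/
def IsRectangle (δ : ℝ) (br : M → M → M) (R : Set M) : Prop :=
  R.Nonempty ∧ Metric.diam R < δ ∧ ∀ x ∈ R, ∀ y ∈ R, br x y ∈ R

/-- Stable border `∂^s R`: points of `R` that are not interior points of
`W^u(x,R) = W^u_ε(x) ∩ R` in the subspace topology of `W^u_ε(x)`. -/
def stableBorder (f : Equiv.Perm M) (ε : ℝ) (R : Set M) : Set M :=
  {x : M | x ∈ R ∧ ¬ ∃ U : Set M, IsOpen U ∧ x ∈ U ∧ U ∩ epsUnstable f ε x ⊆ R}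

/-- Unstable border `∂^u R`: points of `R` that are not interior points of
`W^s(x,R) = W^s_ε(x) ∩ R` in the subspace topology of `W^s_ε(x)`. -/
def unstableBorder (f : Equiv.Perm M) (ε : ℝ) (R : Set M) : Set M :=
  {x : M | x ∈ R ∧ ¬ ∃ U : Set M, IsOpen U ∧ x ∈ U ∧ U ∩ epsStable f ε x ⊆ R}

/-- A Markov partition: a finite family of proper rectangles covering `M`, with pairwise
disjoint interiors, satisfying the Markov inclusions for the invariant fibers. -/
def IsMarkovPartition (f : Equiv.Perm M) (ε δ : ℝ) (br : M → M → M) {m : ℕ}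
    (R : Fin m → Set M) : Prop :=
  (∀ i, IsRectangle δ br (R i)) ∧
  (∀ i, R i = closure (interior (R i))) ∧
  (⋃ i, R i) = Set.univ ∧
  (∀ i j, i ≠ j → interior (R i) ∩ interior (R j) = ∅) ∧
  ∀ i j, ∀ x ∈ interior (R i) ∩ ⇑f ⁻¹' interior (R j),
    ⇑f '' (epsStable f ε x ∩ R i) ⊆ epsStable f ε (f x) ∩ R j ∧
    epsUnstable f ε (f x) ∩ R j ⊆ ⇑f '' (epsUnstable f ε x ∩ R i)

/-! The graph of `(x, y) ↦ [x, y]` over `{dist x y < δ}` is the set of triples `(x, y, z)`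
with `z ∈ W^s_ε(x) ∩ W^u_ε(y)`, cut out by the closed conditions `dist (fⁿ x) (fⁿ z) ≤ ε`
(`n ≥ 0`) and `dist (fⁿ y) (fⁿ z) ≤ ε` (`n ≤ 0`). A map into a compact space with closed
graph is continuous. -/

theorem Equiv.Perm.continuous_zpow {X : Type*} [TopologicalSpace X] {f : Equiv.Perm X}
    (hf : Continuous f) (hf' : Continuous f.symm) : ∀ n : ℤ, Continuous ⇑(f ^ n)
  | (n : ℕ) => by simpa only [zpow_natCast, Equiv.Perm.coe_pow] using hf.iterate n
  | .negSucc n => by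
    simpa only [zpow_negSucc, ← inv_pow, Equiv.Perm.coe_pow, Equiv.Perm.inv_def] using
      hf'.iterate (n + 1)

/-- The projection `X × Y → X` is closed since `Y` is compact, and `g ⁻¹' C` is the projection
of the part of the graph lying over `C`. -/
theorem continuous_of_isClosed_graph_of_compactSpace {X Y : Type*} [TopologicalSpace X]
    [TopologicalSpace Y] [CompactSpace Y] {g : X → Y} (hg : IsClosed {q : X × Y | q.2 = g q.1}) :
    Continuous g := by
  rw [continuous_iff_isClosed]
  intro C hC
  have hpre : g ⁻¹' C = Prod.fst '' ({q : X × Y | q.2 = g q.1} ∩ univ ×ˢ C) := by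
    ext x
    constructor
    · exact fun hx => ⟨(x, g x), ⟨rfl, trivial, hx⟩, rfl⟩
    · rintro ⟨⟨a, b⟩, ⟨hb, -, hbC⟩, rfl⟩
      exact (show b = g a from hb) ▸ hbC
  rw [hpre]
  exact isClosedMap_fst_of_compactSpace _ (hg.inter (isClosed_univ.prod hC))

section

variable {f : Equiv.Perm M} (hf : Continuous f) (hf' : Continuous f.symm) (ε : ℝ)
include hf hf'
omit [CompactSpace M]

theorem isClosed_setOf_forall_dist_zpow_le (S : Set ℤ) :
    IsClosed {p : M × M | ∀ n ∈ S, dist ((f ^ n) p.1) ((f ^ n) p.2) ≤ ε} := by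
  simp only [ofPred_forall]
  exact isClosed_iInter fun n => isClosed_iInter fun _ => isClosed_le
    (((f.continuous_zpow hf hf' n).comp continuous_fst).dist
      ((f.continuous_zpow hf hf' n).comp continuous_snd)) continuous_const

theorem isClosed_setOf_mem_epsStable : IsClosed {p : M × M | p.2 ∈ epsStable f ε p.1} :=
  isClosed_setOf_forall_dist_zpow_le hf hf' ε (Ici 0)

theorem isClosed_setOf_mem_epsUnstable : IsClosed {p : M × M | p.2 ∈ epsUnstable f ε p.1} :=
  isClosed_setOf_forall_dist_zpow_le hf hf' ε (Iic 0)

end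

theorem stmt_3_general (f : Equiv.Perm M) (hf : Continuous ⇑f) (hf' : Continuous ⇑f.symm)
    (ε δ : ℝ) (br : M → M → M)
    (hbr : ∀ x y : M, dist x y < δ → epsStable f ε x ∩ epsUnstable f ε y = {br x y}) :
    ContinuousOn (fun p : M × M => br p.1 p.2) {p : M × M | dist p.1 p.2 < δ} := by
  rw [continuousOn_iff_continuous_domRestrict]
  apply continuous_of_isClosed_graph_of_compactSpace
  have hgraph : {q : {p : M × M | dist p.1 p.2 < δ} × M | q.2 = br q.1.1.1 q.1.1.2} =
      (fun q => ((q.1 : M × M).1, q.2)) ⁻¹' {p | p.2 ∈ epsStable f ε p.1} ∩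
        (fun q => ((q.1 : M × M).2, q.2)) ⁻¹' {p | p.2 ∈ epsUnstable f ε p.1} := by
    ext ⟨⟨p, hp⟩, z⟩
    show z = br p.1 p.2 ↔ z ∈ epsStable f ε p.1 ∩ epsUnstable f ε p.2
    rw [hbr p.1 p.2 hp, mem_singleton_iff]
  simp only [Set.domRestrict_apply]
  rw [hgraph]
  exact ((isClosed_setOf_mem_epsStable hf hf' ε).preimage (by fun_prop)).inter
    ((isClosed_setOf_mem_epsUnstable hf hf' ε).preimage (by fun_prop))

/-- With `ε`, `δ` and the bracket `[·,·]` fixed as in the standing assumptions,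
the map `(x, y) ↦ [x, y]` is continuous on `{(x, y) : dist x y < δ}`. -/
theorem stmt_3 (f : Equiv.Perm M) (hf : Continuous ⇑f) (hf' : Continuous ⇑f.symm)
    (ρ ε δ : ℝ) (hρ : 0 < ρ) (hexp : IsExpansiveWith f ρ)
    (hε0 : 0 < ε) (hε : ε ≤ ρ / 4) (hδ : 0 < δ) (br : M → M → M)
    (hbr : ∀ x y : M, dist x y < δ → epsStable f ε x ∩ epsUnstable f ε y = {br x y}) :
    ContinuousOn (fun p : M × M => br p.1 p.2) {p : M × M | dist p.1 p.2 < δ} :=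
  stmt_3_general f hf hf' ε δ br hbr
end

section
/- Let R_1, …, R_m be a Markov partition for f of diameter less than ρ, with transition matrix A. Then: (1) for every a ∈ Σ_A, the intersection ⋂_{j∈ℤ} f^{-j}(R_{a_j}) consists of exactly one point, denoted π(a); (2) the resulting map π : Σ_A → M is continuous, surjective, and satisfies π ∘ σ = f ∘ π; (3) π is injective over points whose orbit avoids the border of the partition: if π(a) = π(a') and f^n(π(a)) ∉ ⋃_{i=1}^m ∂R_i for all n ∈ ℤ (∂R_i the topological frontier), then a = a'. -/
open Set Filter Metric Topology

variable {M : Type*} [MetricSpace M] [CompactSpace M]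

/-! A finite admissible word is realised by prepending one symbol at a time: the points realising
a word are saturated by local stable sets inside its first rectangle, Markov property (ii) pulls a
point back into the previous rectangle, and property (i), extended from interior points by a
bracket argument, preserves the saturation. Compactness passes to infinite words, and expansivity
with `diam R_i < ρ` makes the realising point unique. Uniqueness makes the graph of `π` closed,
hence `π` continuous; its compact range contains the points whose orbit avoids the frontiers
(dense by Baire), since such a point has an admissible itinerary read off from interiors. Off the
border the interiors are disjoint, which forces equal itineraries. -/

theorem Equiv.Perm.zpow_add_one_apply {α : Type*} (f : Equiv.Perm α) (n : ℤ) (x : α) :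
    (f ^ (n + 1)) x = (f ^ n) (f x) := by
  rw [zpow_add_one, mul_apply]

section Topology

variable {X Y : Type*} [TopologicalSpace X] [TopologicalSpace Y]

theorem continuous_of_isClosed_graph [CompactSpace Y] {g : X → Y}
    (hg : IsClosed {p : X × Y | p.2 = g p.1}) : Continuous g := by
  refine continuous_iff_isClosed.2 fun C hC => ?_
  have hpre : g ⁻¹' C = Prod.fst '' ({p : X × Y | p.2 = g p.1} ∩ univ ×ˢ C) := by
    ext x
    simp
  rw [hpre]
  exact isClosedMap_fst_of_compactSpace _ (hg.inter (isClosed_univ.prod hC))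

theorem mem_interior_of_mem_of_notMem_frontier {s : Set X} {x : X} (hs : x ∈ s)
    (hx : x ∉ frontier s) : x ∈ interior s := by
  by_contra h
  exact hx ⟨subset_closure hs, h⟩

namespace Equiv.Perm

variable {f : Equiv.Perm X}

theorem continuous_zpow_s19 (hf : Continuous f) (hf' : Continuous f.symm) :
    ∀ n : ℤ, Continuous ⇑(f ^ n)
  | (n : ℕ) => by rw [zpow_natCast, coe_pow]; exact hf.iterate n
  | .negSucc n => by rw [zpow_negSucc, ← inv_pow, coe_pow, coe_inv]; exact hf'.iterate _

theorem isOpenMap_zpow (hf : Continuous f) (hf' : Continuous f.symm) (n : ℤ) :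
    IsOpenMap ⇑(f ^ n) :=
  (Homeomorph.mk (f ^ n) (continuous_zpow_s19 hf hf' n)
    (by have h := continuous_zpow_s19 hf hf' (-n); rw [zpow_neg] at h; exact h)).isOpenMap

-- Baire category: the frontier of a closed set is nowhere dense.
theorem dense_setOf_forall_zpow_notMem_frontier [BaireSpace X] {ι : Type*} [Countable ι]
    (hf : Continuous f) (hf' : Continuous f.symm) {R : ι → Set X} (hR : ∀ i, IsClosed (R i)) :
    Dense {x | ∀ n : ℤ, (f ^ n) x ∉ ⋃ i, frontier (R i)} := by
  have hset : {x | ∀ n : ℤ, (f ^ n) x ∉ ⋃ i, frontier (R i)} =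
      ⋂ p : ℤ × ι, (f ^ p.1) ⁻¹' (frontier (R p.2))ᶜ := by
    ext x
    simp [forall_comm (α := ℤ)]
  rw [hset]
  refine dense_iInter_of_isOpen (fun p => ?_) fun p => ?_
  · exact isClosed_frontier.isOpen_compl.preimage (continuous_zpow_s19 hf hf' p.1)
  · exact (interior_eq_empty_iff_dense_compl.1 (interior_frontier (hR p.2))).preimage
      (isOpenMap_zpow hf hf' p.1)

end Equiv.Perm

end Topology

section Itineraries

variable {X : Type*} {m : ℕ}

def IsItinerary (f : Equiv.Perm X) (R : Fin m → Set X) (a : ℤ → Fin m) (x : X) : Prop :=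
  ∀ j : ℤ, (f ^ j) x ∈ R (a j)

def IsAdmissible [TopologicalSpace X] (f : Equiv.Perm X) (R : Fin m → Set X) (a : ℤ → Fin m) :
    Prop :=
  ∀ i : ℤ, (interior (R (a i)) ∩ ⇑f ⁻¹' interior (R (a (i + 1)))).Nonempty

def cylinder (f : Equiv.Perm X) (R : Fin m → Set X) (a : ℤ → Fin m) (k : ℤ) (n : ℕ) : Set X :=
  {x | ∀ j : ℕ, j ≤ n → (f ^ j) x ∈ R (a (k + j))}

variable {f : Equiv.Perm X} {R : Fin m → Set X} {a : ℤ → Fin m} {k : ℤ} {n : ℕ} {x : X}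

theorem mem_cylinder_zero : x ∈ cylinder f R a k 0 ↔ x ∈ R (a k) := by
  simp [cylinder]

theorem mem_cylinder_succ :
    x ∈ cylinder f R a k (n + 1) ↔ x ∈ R (a k) ∧ f x ∈ cylinder f R a (k + 1) n := by
  refine ⟨fun h => ⟨by simpa using h 0 (Nat.zero_le _), fun j hj => ?_⟩, ?_⟩
  · have := h (j + 1) (by omega)
    rwa [pow_succ, Equiv.Perm.mul_apply, Nat.cast_succ, add_comm (j : ℤ), ← add_assoc] at this
  · rintro ⟨h0, h1⟩ (_ | j) hj
    · simpa using h0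
    · rw [pow_succ, Equiv.Perm.mul_apply, Nat.cast_succ, add_comm (j : ℤ), ← add_assoc]
      exact h1 j (by omega)

theorem mem_of_mem_cylinder (hx : x ∈ cylinder f R a k n) : x ∈ R (a k) := by
  simpa using hx 0 (Nat.zero_le _)

theorem isClosed_setOf_isItinerary [TopologicalSpace X] (hf : Continuous f)
    (hf' : Continuous f.symm) (hR : ∀ i, IsClosed (R i)) :
    IsClosed {p : (ℤ → Fin m) × X | IsItinerary f R p.1 p.2} := by
  simp only [IsItinerary, ofPred_forall]
  refine isClosed_iInter fun j => ?_
  have hj : {p : (ℤ → Fin m) × X | (f ^ j) p.2 ∈ R (p.1 j)} =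
      ⋃ i, {p | p.1 j = i} ∩ {p | (f ^ j) p.2 ∈ R i} := by
    ext p
    simp
  rw [hj]
  exact isClosed_iUnion_of_finite fun i =>
    ((isClosed_discrete {i}).preimage
      (by fun_prop : Continuous fun p : (ℤ → Fin m) × X => p.1 j)).inter
    ((hR i).preimage ((Equiv.Perm.continuous_zpow_s19 hf hf' j).comp continuous_snd))

theorem isClosed_setOf_isAdmissible [TopologicalSpace X] :
    IsClosed {a : ℤ → Fin m | IsAdmissible f R a} := by
  simp only [IsAdmissible, ofPred_forall]
  exact isClosed_iInter fun i => (isClosed_discrete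
    {q : Fin m × Fin m | (interior (R q.1) ∩ ⇑f ⁻¹' interior (R q.2)).Nonempty}).preimage
    (by fun_prop : Continuous fun a : ℤ → Fin m => (a i, a (i + 1)))

instance [TopologicalSpace X] : CompactSpace {a : ℤ → Fin m // IsAdmissible f R a} :=
  isCompact_iff_compactSpace.1 isClosed_setOf_isAdmissible.isCompact

theorem exists_isAdmissible_isItinerary [TopologicalSpace X] (hcover : ⋃ i, R i = univ)
    (hx : ∀ n : ℤ, (f ^ n) x ∉ ⋃ i, frontier (R i)) :
    ∃ a, IsAdmissible f R a ∧ IsItinerary f R a x := by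
  have hint : ∀ n : ℤ, ∃ i, (f ^ n) x ∈ interior (R i) := fun n => by
    obtain ⟨i, hi⟩ := mem_iUnion.1 (hcover ▸ mem_univ ((f ^ n) x))
    exact ⟨i, mem_interior_of_mem_of_notMem_frontier hi fun h => hx n (mem_iUnion.2 ⟨i, h⟩)⟩
  choose a ha using hint
  refine ⟨a, fun i => ⟨(f ^ i) x, ha i, ?_⟩, fun j => interior_subset (ha j)⟩
  rw [mem_preimage, ← Equiv.Perm.mul_apply, mul_self_zpow]
  exact ha (i + 1)

theorem eq_of_mem_of_notMem_frontier [TopologicalSpace X]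
    (hdisj : ∀ i j, i ≠ j → interior (R i) ∩ interior (R j) = ∅) {i j : Fin m}
    (hi : x ∈ R i) (hj : x ∈ R j) (hx : x ∉ ⋃ k, frontier (R k)) : i = j := by
  have hint : ∀ {k}, x ∈ R k → x ∈ interior (R k) := fun hk =>
    mem_interior_of_mem_of_notMem_frontier hk fun h => hx (mem_iUnion.2 ⟨_, h⟩)
  by_contra hij
  exact (hdisj i j hij).subset ⟨hint hi, hint hj⟩

end Itineraries

section Markov

variable {X : Type*} [MetricSpace X] {f : Equiv.Perm X} {ρ ε δ : ℝ} {br : X → X → X} {m : ℕ}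
  {R : Fin m → Set X} {x y : X}

theorem mem_epsUnstable_comm : y ∈ epsUnstable f ε x ↔ x ∈ epsUnstable f ε y := by
  simp [epsUnstable, dist_comm]

theorem apply_mem_epsStable (h : y ∈ epsStable f ε x) : f y ∈ epsStable f ε (f x) :=
  fun n hn => by
    rw [← Equiv.Perm.zpow_add_one_apply, ← Equiv.Perm.zpow_add_one_apply]
    exact h (n + 1) (by omega)

theorem symm_apply_mem_epsUnstable (h : y ∈ epsUnstable f ε x) :
    f.symm y ∈ epsUnstable f ε (f.symm x) :=
  fun n hn => by
    have e : ∀ z, (f ^ n) (f.symm z) = (f ^ (n - 1)) z := fun z => by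
      rw [zpow_sub_one, Equiv.Perm.mul_apply]; rfl
    rw [e, e]
    exact h (n - 1) (by omega)

-- The orbits are `2ε`-close: compare through `b` at times `≤ 0` and through `c` at times `≥ 1`.
theorem IsExpansiveWith.eq_of_mem_epsUnstable_of_apply_mem_epsStable
    (hexp : IsExpansiveWith f ρ) (hερ : ε + ε ≤ ρ) {b c : X}
    (hxb : x ∈ epsUnstable f ε b) (hyb : y ∈ epsUnstable f ε b)
    (hxc : f x ∈ epsStable f ε c) (hyc : f y ∈ epsStable f ε c) : x = y := by
  refine hexp x y fun n => ?_
  rcases le_or_gt n 0 with hn | hn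
  · calc dist ((f ^ n) x) ((f ^ n) y)
        ≤ dist ((f ^ n) b) ((f ^ n) x) + dist ((f ^ n) b) ((f ^ n) y) :=
          dist_triangle_left _ _ _
      _ ≤ ρ := (add_le_add (hxb n hn) (hyb n hn)).trans hερ
  · obtain ⟨k, rfl⟩ : ∃ k, n = k + 1 := ⟨n - 1, by ring⟩
    rw [Equiv.Perm.zpow_add_one_apply, Equiv.Perm.zpow_add_one_apply]
    calc dist ((f ^ k) (f x)) ((f ^ k) (f y))
        ≤ dist ((f ^ k) c) ((f ^ k) (f x)) + dist ((f ^ k) c) ((f ^ k) (f y)) :=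
          dist_triangle_left _ _ _
      _ ≤ ρ := (add_le_add (hxc k (by omega)) (hyc k (by omega))).trans hερ

theorem IsExpansiveWith.eq_of_isItinerary [CompactSpace X] (hexp : IsExpansiveWith f ρ)
    (hdiam : ∀ i, diam (R i) ≤ ρ) {a : ℤ → Fin m} (hx : IsItinerary f R a x)
    (hy : IsItinerary f R a y) : x = y :=
  hexp x y fun j =>
    (dist_le_diam_of_mem isBounded_of_compactSpace (hx j) (hy j)).trans (hdiam _)

theorem continuous_of_forall_isItinerary [CompactSpace X] (hf : Continuous f)
    (hf' : Continuous f.symm) (hexp : IsExpansiveWith f ρ) (hdiam : ∀ i, diam (R i) ≤ ρ)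
    (hR : ∀ i, IsClosed (R i)) {P : (ℤ → Fin m) → Prop} (π : {a // P a} → X)
    (hπ : ∀ a, IsItinerary f R a.1 (π a)) : Continuous π := by
  refine continuous_of_isClosed_graph ?_
  have hgraph : {p : {a // P a} × X | p.2 = π p.1} =
      (fun p => (p.1.1, p.2)) ⁻¹' {q : (ℤ → Fin m) × X | IsItinerary f R q.1 q.2} := by
    ext p
    exact ⟨fun (h : p.2 = π p.1) => show IsItinerary f R p.1.1 p.2 from h ▸ hπ p.1,
      fun h => hexp.eq_of_isItinerary hdiam h (hπ p.1)⟩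
  rw [hgraph]
  exact (isClosed_setOf_isItinerary hf hf' hR).preimage (by fun_prop)

theorem IsMarkovPartition.isClosed (hMP : IsMarkovPartition f ε δ br R) (i : Fin m) :
    IsClosed (R i) := by
  rw [hMP.2.1 i]
  exact isClosed_closure

theorem IsMarkovPartition.bracket_mem [CompactSpace X] (hMP : IsMarkovPartition f ε δ br R)
    (hbr : ∀ x y : X, dist x y < δ → epsStable f ε x ∩ epsUnstable f ε y = {br x y})
    {i : Fin m} (hx : x ∈ R i) (hy : y ∈ R i) :
    br x y ∈ epsStable f ε x ∩ epsUnstable f ε y ∩ R i := by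
  obtain ⟨-, hdiam, hclosed⟩ := hMP.1 i
  refine ⟨?_, hclosed x hx y hy⟩
  rw [hbr x y ((dist_le_diam_of_mem isBounded_of_compactSpace hx hy).trans_lt hdiam)]
  exact mem_singleton _

theorem IsMarkovPartition.surjective_of_isItinerary [CompactSpace X]
    (hMP : IsMarkovPartition f ε δ br R) (hf : Continuous f) (hf' : Continuous f.symm)
    (hexp : IsExpansiveWith f ρ) (hdiam : ∀ i, diam (R i) ≤ ρ)
    (π : {a // IsAdmissible f R a} → X) (hπ : ∀ a, IsItinerary f R a.1 (π a))
    (hcont : Continuous π) : Function.Surjective π := by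
  have hdense : Dense (range π) :=
    (Equiv.Perm.dense_setOf_forall_zpow_notMem_frontier hf hf' hMP.isClosed).mono
      fun x hx => by
        obtain ⟨a, ha, hxa⟩ := exists_isAdmissible_isItinerary hMP.2.2.1 hx
        exact ⟨⟨a, ha⟩, hexp.eq_of_isItinerary hdiam (hπ _) hxa⟩
  rw [← range_eq_univ, ← (isCompact_range hcont).isClosed.closure_eq]
  exact hdense.closure_eq

variable [CompactSpace X] (hMP : IsMarkovPartition f ε δ br R)
  (hbr : ∀ x y : X, dist x y < δ → epsStable f ε x ∩ epsUnstable f ε y = {br x y})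
  (hexp : IsExpansiveWith f ρ) (hερ : ε + ε ≤ ρ)
include hMP hbr hexp hερ

-- Markov property (i) at the transition point `p` gives `f [p, y] ∈ R_j`, and expansivity
-- identifies `f y` with the bracket `[f x, f [p, y]] ∈ R_j`.
theorem IsMarkovPartition.apply_mem_of_mem_epsStable {i j : Fin m} {p : X}
    (hp : p ∈ interior (R i) ∩ ⇑f ⁻¹' interior (R j)) (hfx : f x ∈ R j)
    (hy : y ∈ epsStable f ε x) (hyR : y ∈ R i) : f y ∈ R j := by
  set β := br p y
  obtain ⟨⟨hβs, hβu⟩, hβR⟩ := hMP.bracket_mem hbr (interior_subset hp.1) hyR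
  have hfβ : f β ∈ epsStable f ε (f p) ∩ R j := (hMP.2.2.2.2 i j p hp).1 ⟨β, ⟨hβs, hβR⟩, rfl⟩
  set z := br (f x) (f β)
  obtain ⟨⟨hzs, hzu⟩, hzR⟩ := hMP.bracket_mem hbr hfx hfβ.2
  have hyz : y = f.symm z :=
    hexp.eq_of_mem_epsUnstable_of_apply_mem_epsStable hερ (mem_epsUnstable_comm.1 hβu)
      (by simpa using symm_apply_mem_epsUnstable hzu) (apply_mem_epsStable hy)
      (by simpa using hzs)
  rwa [hyz, Equiv.apply_symm_apply]

theorem IsMarkovPartition.mem_cylinder_of_mem_epsStable {a : ℤ → Fin m}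
    (ha : IsAdmissible f R a) {k : ℤ} {n : ℕ} (hx : x ∈ cylinder f R a k n)
    (hy : y ∈ epsStable f ε x) (hyR : y ∈ R (a k)) : y ∈ cylinder f R a k n := by
  induction n generalizing k x y with
  | zero => exact mem_cylinder_zero.2 hyR
  | succ n ih =>
    obtain ⟨-, hfx⟩ := mem_cylinder_succ.1 hx
    have hfy := hMP.apply_mem_of_mem_epsStable hbr hexp hερ (ha k).some_mem
      (mem_of_mem_cylinder hfx) hy hyR
    exact mem_cylinder_succ.2 ⟨hyR, ih hfx (apply_mem_epsStable hy) hfy⟩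

theorem IsMarkovPartition.cylinder_nonempty {a : ℤ → Fin m} (ha : IsAdmissible f R a)
    (k : ℤ) (n : ℕ) : (cylinder f R a k n).Nonempty := by
  induction n generalizing k with
  | zero => exact (hMP.1 (a k)).1.mono fun _ => mem_cylinder_zero.2
  | succ n ih =>
    obtain ⟨y, hy⟩ := ih (k + 1)
    obtain ⟨p, hp⟩ := ha k
    obtain ⟨⟨hζs, hζu⟩, hζR⟩ :=
      hMP.bracket_mem hbr (mem_of_mem_cylinder hy) (interior_subset hp.2)
    obtain ⟨u, ⟨-, huR⟩, hfu⟩ := (hMP.2.2.2.2 (a k) (a (k + 1)) p hp).2 ⟨hζu, hζR⟩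
    refine ⟨u, mem_cylinder_succ.2 ⟨huR, ?_⟩⟩
    rw [hfu]
    exact hMP.mem_cylinder_of_mem_epsStable hbr hexp hερ ha hy hζs hζR

theorem IsMarkovPartition.exists_isItinerary (hf : Continuous f) (hf' : Continuous f.symm)
    {a : ℤ → Fin m} (ha : IsAdmissible f R a) : ∃ x, IsItinerary f R a x := by
  have hfinite (u : Finset ℤ) : (univ ∩ ⋂ j ∈ u, (f ^ j) ⁻¹' R (a j)).Nonempty := by
    set N := u.sup Int.natAbs
    obtain ⟨x, hx⟩ := hMP.cylinder_nonempty hbr hexp hερ ha (-N) (2 * N)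
    refine ⟨(f ^ (N : ℤ)) x, mem_univ _, mem_iInter₂.2 fun j hj => ?_⟩
    have hjN : j.natAbs ≤ N := Finset.le_sup (f := Int.natAbs) hj
    have hx' := hx (j + N).toNat (by omega)
    rw [← zpow_natCast, Int.toNat_of_nonneg (by omega), show -(N : ℤ) + (j + N) = j by ring]
      at hx'
    rwa [mem_preimage, ← Equiv.Perm.mul_apply, ← zpow_add]
  obtain ⟨x, -, hx⟩ := isCompact_univ.inter_iInter_nonempty _
    (fun j => (hMP.isClosed _).preimage (Equiv.Perm.continuous_zpow_s19 hf hf' j)) hfinite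
  exact ⟨x, mem_iInter.1 hx⟩

end Markov

theorem stmt_19_general (f : Equiv.Perm M) (hf : Continuous ⇑f) (hf' : Continuous ⇑f.symm)
    (ρ ε δ : ℝ) (hexp : IsExpansiveWith f ρ)
    (hε0 : 0 < ε) (hε : ε ≤ ρ / 4) (br : M → M → M)
    (hbr : ∀ x y : M, dist x y < δ → epsStable f ε x ∩ epsUnstable f ε y = {br x y})
    {m : ℕ} (R : Fin m → Set M) (hMP : IsMarkovPartition f ε δ br R)
    (hdiam : ∀ i, Metric.diam (R i) < ρ) :
    (∀ a : ℤ → Fin m,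
      (∀ i : ℤ, (interior (R (a i)) ∩ ⇑f ⁻¹' interior (R (a (i + 1)))).Nonempty) →
      ∃! x : M, ∀ j : ℤ, (f ^ j) x ∈ R (a j)) ∧
    ∀ π : {a : ℤ → Fin m //
        ∀ i : ℤ, (interior (R (a i)) ∩ ⇑f ⁻¹' interior (R (a (i + 1)))).Nonempty} → M,
      (∀ a, ∀ j : ℤ, (f ^ j) (π a) ∈ R (a.1 j)) →
      Continuous π ∧
      Function.Surjective π ∧
      (∀ a, π ⟨fun n => a.1 (n + 1), fun i => a.2 (i + 1)⟩ = f (π a)) ∧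
      ∀ a a', π a = π a' → (∀ n : ℤ, (f ^ n) (π a) ∉ ⋃ i, frontier (R i)) → a = a' := by
  have hερ : ε + ε ≤ ρ := by linarith
  have hdiam' : ∀ i, diam (R i) ≤ ρ := fun i => (hdiam i).le
  have huniq {a : ℤ → Fin m} {x y : M} : IsItinerary f R a x → IsItinerary f R a y → x = y :=
    hexp.eq_of_isItinerary hdiam'
  refine ⟨fun a ha => ?_, fun π hπ => ?_⟩
  · obtain ⟨x, hx⟩ := hMP.exists_isItinerary hbr hexp hερ hf hf' ha
    exact ⟨x, hx, fun y hy => huniq hy hx⟩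
  have hcont := continuous_of_forall_isItinerary hf hf' hexp hdiam' hMP.isClosed π hπ
  refine ⟨hcont, hMP.surjective_of_isItinerary hf hf' hexp hdiam' π hπ hcont,
    fun a => huniq (hπ _) fun j => ?_, fun a a' h hborder => ?_⟩
  · rw [← Equiv.Perm.zpow_add_one_apply]
    exact hπ a (j + 1)
  · refine Subtype.ext (funext fun n => eq_of_mem_of_notMem_frontier hMP.2.2.2.1 (hπ a n) ?_
      (hborder n))
    rw [h]
    exact hπ a' n

/-- For a Markov partition of diameter less than `ρ` with transition matrix `A`:
(1) for every `a ∈ Σ_A` the intersection `⋂_{j∈ℤ} f^{-j}(R_{a_j})` consists of exactly one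
point `π(a)`; (2) the resulting map `π : Σ_A → M` (any map with the defining property) is
continuous, surjective and satisfies `π ∘ σ = f ∘ π`; (3) `π` is injective over points whose
orbit avoids the border `⋃ ∂R_i` of the partition. -/
theorem stmt_19 (f : Equiv.Perm M) (hf : Continuous ⇑f) (hf' : Continuous ⇑f.symm)
    (ρ ε δ : ℝ) (hρ : 0 < ρ) (hexp : IsExpansiveWith f ρ)
    (hε0 : 0 < ε) (hε : ε ≤ ρ / 4) (hδ : 0 < δ) (br : M → M → M)
    (hbr : ∀ x y : M, dist x y < δ → epsStable f ε x ∩ epsUnstable f ε y = {br x y})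
    {m : ℕ} (R : Fin m → Set M) (hMP : IsMarkovPartition f ε δ br R)
    (hdiam : ∀ i, Metric.diam (R i) < ρ) :
    (∀ a : ℤ → Fin m,
      (∀ i : ℤ, (interior (R (a i)) ∩ ⇑f ⁻¹' interior (R (a (i + 1)))).Nonempty) →
      ∃! x : M, ∀ j : ℤ, (f ^ j) x ∈ R (a j)) ∧
    ∀ π : {a : ℤ → Fin m //
        ∀ i : ℤ, (interior (R (a i)) ∩ ⇑f ⁻¹' interior (R (a (i + 1)))).Nonempty} → M,
      (∀ a, ∀ j : ℤ, (f ^ j) (π a) ∈ R (a.1 j)) →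
      Continuous π ∧
      Function.Surjective π ∧
      (∀ a, π ⟨fun n => a.1 (n + 1), fun i => a.2 (i + 1)⟩ = f (π a)) ∧
      ∀ a a', π a = π a' → (∀ n : ℤ, (f ^ n) (π a) ∉ ⋃ i, frontier (R i)) → a = a' :=
  stmt_19_general f hf hf' ρ ε δ hexp hε0 hε br hbr R hMP hdiam
end
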